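/- Under the setting of the previous lower bound, Q(Z) = log(n(C−1)) − 1 − 1/(C−1) holds if Z satisfies: ‖z_i‖ = 1 for all i, z_i = μ_{y_i} for all i (within-class collapse), and the class means μ₁, …, μ_C form a simplex ETF (∑_c μ_c = 0, ‖μ_c‖ = 1, and ⟨μ_c, μ_{c'}⟩ = −1/(C−1) for c ≠ c'). In particular, any simplex-ETF collapsed configuration is a global minimizer of Q. -/

import Mathlib

/-!
By Jensen's inequality each log-sum-exp over the `n(C-1)` samples of the other classes is at
least `log (n(C-1))` plus the mean of its exponents. Summed over all samples, the inter-class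
inner products add up to `‖∑ zᵢ‖² - ∑_c ‖∑_{yᵢ = c} zᵢ‖² ≥ -C n²` when `‖zᵢ‖ ≤ 1`, which gives
`Q ≥ log (n(C-1)) - 1 - 1/(C-1)`. A collapsed simplex ETF has unit norms and all inter-class
inner products equal to `-1/(C-1)`, and a direct computation shows that it attains this bound.
-/

open Finset Real RealInnerProductSpace

theorem log_card_add_mean_le_log_sum_exp {ι : Type*} (s : Finset ι) (hs : s.Nonempty)
    (a : ι → ℝ) : log #s + (∑ j ∈ s, a j) / #s ≤ log (∑ j ∈ s, exp (a j)) := by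
  have hk : (0 : ℝ) < #s := by exact_mod_cast hs.card_pos
  have jensen := convexOn_exp.map_sum_le (t := s) (w := fun _ => (#s : ℝ)⁻¹) (p := a)
    (fun _ _ => by positivity) (by simp [hk.ne']) (by simp)
  simp only [smul_eq_mul, inv_mul_eq_div, ← sum_div] at jensen
  rw [← log_exp ((∑ j ∈ s, a j) / #s), ← log_mul hk.ne' (exp_pos _).ne']
  gcongr
  rwa [← le_div_iff₀' hk]

section Labels

variable {ι κ E : Type*} [Fintype ι] [DecidableEq κ]
  [NormedAddCommGroup E] [InnerProductSpace ℝ E]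

noncomputable def interClassLogSumExp (y : ι → κ) (w : ι → E) : ℝ :=
  ∑ i, log (∑ j ∈ {j | y j ≠ y i}, exp ⟪w i, w j⟫)

/-- The objective `Q(Z)` of the statement, with `N` the number of samples. -/
noncomputable def nsclLoss (y : ι → κ) (w : ι → E) : ℝ :=
  -(1 / (Fintype.card ι : ℝ)) * ∑ i, ‖w i‖ ^ 2 +
    (1 / (Fintype.card ι : ℝ)) * interClassLogSumExp y w

theorem nsclLoss_eq_div (y : ι → κ) (w : ι → E) :
    nsclLoss y w = (interClassLogSumExp y w - ∑ i, ‖w i‖ ^ 2) / Fintype.card ι := by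
  rw [nsclLoss]; ring

theorem nsclLoss_fin {N : ℕ} (y : Fin N → κ) (w : Fin N → E) :
    nsclLoss y w = -(1 / (N : ℝ)) * ∑ i, ‖w i‖ ^ 2 +
      (1 / (N : ℝ)) *
        ∑ i, log (∑ j ∈ univ.filter (fun j => y j ≠ y i), exp ⟪w i, w j⟫) := by
  rw [nsclLoss, Fintype.card_fin]; rfl

variable [Fintype κ]

theorem card_eq_card_mul_of_fiber_card_eq {y : ι → κ} {n : ℕ}
    (hbal : ∀ c, #{i | y i = c} = n) :
    Fintype.card ι = Fintype.card κ * n := by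
  rw [← card_univ, card_eq_sum_card_fiberwise (f := y) (t := univ) (by simp)]
  simp [hbal]

theorem card_filter_ne_eq {y : ι → κ} {n : ℕ} (hbal : ∀ c, #{i | y i = c} = n) (i : ι) :
    (#{j | y j ≠ y i} : ℝ) = n * (Fintype.card κ - 1) := by
  have hsplit := card_filter_add_card_filter_not (s := univ) (fun j => y j = y i)
  rw [hbal, card_univ, card_eq_card_mul_of_fiber_card_eq hbal] at hsplit
  have hsplitR : (n : ℝ) + #{j | ¬y j = y i} = Fintype.card κ * n := by exact_mod_cast hsplit
  simp only [ne_eq]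
  linarith

theorem sum_sum_inner_filter_ne (y : ι → κ) (w : ι → E) :
    ∑ i, ∑ j ∈ {j | y j ≠ y i}, ⟪w i, w j⟫ =
      ‖∑ i, w i‖ ^ 2 - ∑ c, ‖∑ j ∈ {j | y j = c}, w j‖ ^ 2 := by
  have hrow : ∀ i, ∑ j ∈ {j | y j ≠ y i}, ⟪w i, w j⟫ =
      ⟪w i, ∑ j, w j⟫ - ⟪w i, ∑ j ∈ {j | y j = y i}, w j⟫ := by
    intro i
    rw [inner_sum, inner_sum, ← sum_filter_add_sum_filter_not univ (fun j => y j = y i)]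
    ring
  simp only [hrow, sum_sub_distrib, ← sum_inner, real_inner_self_eq_norm_sq]
  congr 1
  rw [← sum_fiberwise univ y]
  refine sum_congr rfl fun c _ => ?_
  rw [← real_inner_self_eq_norm_sq, sum_inner]
  exact sum_congr rfl fun i hi => by rw [(mem_filter.mp hi).2]

variable {y : ι → κ} {n : ℕ} {w : ι → E}

theorem neg_card_mul_sq_le_sum_sum_inner_filter_ne (hbal : ∀ c, #{i | y i = c} = n)
    (hw : ∀ i, ‖w i‖ ≤ 1) :
    -(Fintype.card κ * n ^ 2 : ℝ) ≤ ∑ i, ∑ j ∈ {j | y j ≠ y i}, ⟪w i, w j⟫ := by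
  have hclass : ∀ c, ‖∑ j ∈ {j | y j = c}, w j‖ ^ 2 ≤ n ^ 2 := fun c => by
    gcongr
    calc _ ≤ ∑ j ∈ {j | y j = c}, (1 : ℝ) := norm_sum_le_of_le _ fun j _ => hw j
      _ = n := by simp [hbal]
  have hclasses : ∑ c, ‖∑ j ∈ {j | y j = c}, w j‖ ^ 2 ≤ Fintype.card κ * n ^ 2 := by
    simpa using sum_le_sum fun c (_ : c ∈ univ) => hclass c
  rw [sum_sum_inner_filter_ne]
  nlinarith [sq_nonneg ‖∑ i, w i‖]

theorem card_mul_le_interClassLogSumExp (hbal : ∀ c, #{i | y i = c} = n)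
    (hκ : 1 < Fintype.card κ) (hn : 0 < n) (hw : ∀ i, ‖w i‖ ≤ 1) :
    Fintype.card ι * (log (n * (Fintype.card κ - 1)) - 1 / (Fintype.card κ - 1)) ≤
      interClassLogSumExp y w := by
  set M : ℝ := n * (Fintype.card κ - 1)
  have hκ' : (1 : ℝ) < Fintype.card κ := by exact_mod_cast hκ
  have hM : 0 < M := mul_pos (by exact_mod_cast hn) (by linarith)
  have hrow : ∀ i, log M + (∑ j ∈ {j | y j ≠ y i}, ⟪w i, w j⟫) / M ≤
      log (∑ j ∈ {j | y j ≠ y i}, exp ⟪w i, w j⟫) := fun i => by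
    have hne : ({j | y j ≠ y i} : Finset ι).Nonempty := by
      rw [← card_pos, ← Nat.cast_pos (α := ℝ), card_filter_ne_eq hbal i]
      exact hM
    simpa only [card_filter_ne_eq hbal i] using
      log_card_add_mean_le_log_sum_exp _ hne fun j => ⟪w i, w j⟫
  calc Fintype.card ι * (log M - 1 / (Fintype.card κ - 1))
      = Fintype.card ι * log M + -(Fintype.card κ * n ^ 2 : ℝ) / M := by
        rw [card_eq_card_mul_of_fiber_card_eq hbal]
        simp only [M]
        push_cast
        field_simp
        ring
    _ ≤ Fintype.card ι * log M + (∑ i, ∑ j ∈ {j | y j ≠ y i}, ⟪w i, w j⟫) / M := by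
        gcongr
        exact neg_card_mul_sq_le_sum_sum_inner_filter_ne hbal hw
    _ = ∑ i, (log M + (∑ j ∈ {j | y j ≠ y i}, ⟪w i, w j⟫) / M) := by
        rw [sum_add_distrib, sum_div]
        simp
    _ ≤ interClassLogSumExp y w := sum_le_sum fun i _ => hrow i

theorem log_sub_one_sub_le_nsclLoss (hbal : ∀ c, #{i | y i = c} = n)
    (hκ : 1 < Fintype.card κ) (hn : 0 < n) (hw : ∀ i, ‖w i‖ ≤ 1) :
    log (n * (Fintype.card κ - 1)) - 1 - 1 / (Fintype.card κ - 1) ≤ nsclLoss y w := by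
  have hι : (0 : ℝ) < Fintype.card ι := by
    rw [card_eq_card_mul_of_fiber_card_eq hbal]
    positivity
  have hnorms : ∑ i, ‖w i‖ ^ 2 ≤ Fintype.card ι := by
    simpa using sum_le_sum fun i (_ : i ∈ univ) => pow_le_one₀ (norm_nonneg _) (hw i)
  have hlse := card_mul_le_interClassLogSumExp hbal hκ hn hw
  rw [nsclLoss_eq_div, le_div_iff₀ hι]
  linarith

theorem nsclLoss_eq_of_inner_eq {a : ℝ} (hbal : ∀ c, #{i | y i = c} = n)
    (hκ : 1 < Fintype.card κ) (hn : 0 < n) (hnorm : ∀ i, ‖w i‖ = 1)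
    (hinner : ∀ i j, y i ≠ y j → ⟪w i, w j⟫ = a) :
    nsclLoss y w = log (n * (Fintype.card κ - 1)) - 1 + a := by
  have hι : (0 : ℝ) < Fintype.card ι := by
    rw [card_eq_card_mul_of_fiber_card_eq hbal]
    positivity
  have hκ' : (1 : ℝ) < Fintype.card κ := by exact_mod_cast hκ
  have hM : (n : ℝ) * (Fintype.card κ - 1) ≠ 0 := mul_ne_zero (by positivity) (by linarith)
  have hrow : ∀ i, log (∑ j ∈ {j | y j ≠ y i}, exp ⟪w i, w j⟫) =
      log (n * (Fintype.card κ - 1)) + a := fun i => by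
    rw [sum_congr rfl fun j hj => by rw [hinner i j (mem_filter.mp hj).2.symm], sum_const,
      nsmul_eq_mul, card_filter_ne_eq hbal i, log_mul hM (exp_pos a).ne', log_exp]
  rw [nsclLoss_eq_div, interClassLogSumExp, sum_congr rfl fun i _ => hrow i]
  simp only [hnorm, sum_const, card_univ, nsmul_eq_mul]
  field_simp
  ring

end Labels

open Finset in
theorem nscl_etf_global_min_general (d N C n : ℕ) (hC : 2 ≤ C) (hn : 0 < n)
    (z : Fin N → EuclideanSpace ℝ (Fin d))
    (y : Fin N → Fin C)
    (hbal : ∀ c : Fin C, (univ.filter (fun i => y i = c)).card = n)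
    (μ : Fin C → EuclideanSpace ℝ (Fin d))
    (hcollapse : ∀ i, z i = μ (y i))
    (hnorm : ∀ c, ‖μ c‖ = 1)
    (hangle : ∀ c c' : Fin C, c ≠ c' → (inner ℝ (μ c) (μ c') : ℝ) = -1 / ((C : ℝ) - 1)) :
    (-(1 / (N : ℝ)) * ∑ i, ‖z i‖ ^ 2 +
      (1 / (N : ℝ)) * ∑ i : Fin N,
        Real.log (∑ j ∈ univ.filter (fun j => y j ≠ y i), Real.exp (inner ℝ (z i) (z j) : ℝ))
      = Real.log (n * ((C : ℝ) - 1)) - 1 - 1 / ((C : ℝ) - 1)) ∧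
    (∀ w : Fin N → EuclideanSpace ℝ (Fin d), (∀ i, ‖w i‖ ≤ 1) →
      -(1 / (N : ℝ)) * ∑ i, ‖z i‖ ^ 2 +
        (1 / (N : ℝ)) * ∑ i : Fin N,
          Real.log (∑ j ∈ univ.filter (fun j => y j ≠ y i), Real.exp (inner ℝ (z i) (z j) : ℝ))
      ≤ -(1 / (N : ℝ)) * ∑ i, ‖w i‖ ^ 2 +
        (1 / (N : ℝ)) * ∑ i : Fin N,
          Real.log (∑ j ∈ univ.filter (fun j => y j ≠ y i), Real.exp (inner ℝ (w i) (w j) : ℝ))) := by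
  simp only [← nsclLoss_fin]
  have hC' : 1 < Fintype.card (Fin C) := by rw [Fintype.card_fin]; omega
  have hz : nsclLoss y z = Real.log (n * ((C : ℝ) - 1)) - 1 - 1 / ((C : ℝ) - 1) := by
    rw [nsclLoss_eq_of_inner_eq (a := -1 / ((C : ℝ) - 1)) hbal hC' hn
      (fun i => by rw [hcollapse, hnorm])
      (fun i j hij => by rw [hcollapse, hcollapse, hangle _ _ hij]), Fintype.card_fin]
    ring
  refine ⟨hz, fun w hw => ?_⟩
  rw [hz]
  simpa only [Fintype.card_fin] using log_sub_one_sub_le_nsclLoss hbal hC' hn hw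

open Finset in
theorem nscl_etf_global_min (d N C n : ℕ) (hC : 2 ≤ C) (hn : 0 < n)
    (hN : N = C * n) (hd : C - 1 ≤ d)
    (z : Fin N → EuclideanSpace ℝ (Fin d))
    (y : Fin N → Fin C)
    (hbal : ∀ c : Fin C, (univ.filter (fun i => y i = c)).card = n)
    (μ : Fin C → EuclideanSpace ℝ (Fin d))
    (hcollapse : ∀ i, z i = μ (y i))
    (hnorm : ∀ c, ‖μ c‖ = 1)
    (hsum : ∑ c, μ c = 0)
    (hangle : ∀ c c' : Fin C, c ≠ c' → (inner ℝ (μ c) (μ c') : ℝ) = -1 / ((C : ℝ) - 1)) :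
    (-(1 / (N : ℝ)) * ∑ i, ‖z i‖ ^ 2 +
      (1 / (N : ℝ)) * ∑ i : Fin N,
        Real.log (∑ j ∈ univ.filter (fun j => y j ≠ y i), Real.exp (inner ℝ (z i) (z j) : ℝ))
      = Real.log (n * ((C : ℝ) - 1)) - 1 - 1 / ((C : ℝ) - 1)) ∧
    (∀ w : Fin N → EuclideanSpace ℝ (Fin d), (∀ i, ‖w i‖ ≤ 1) →
      -(1 / (N : ℝ)) * ∑ i, ‖z i‖ ^ 2 +
        (1 / (N : ℝ)) * ∑ i : Fin N,
          Real.log (∑ j ∈ univ.filter (fun j => y j ≠ y i), Real.exp (inner ℝ (z i) (z j) : ℝ))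
      ≤ -(1 / (N : ℝ)) * ∑ i, ‖w i‖ ^ 2 +
        (1 / (N : ℝ)) * ∑ i : Fin N,
          Real.log (∑ j ∈ univ.filter (fun j => y j ≠ y i), Real.exp (inner ℝ (w i) (w j) : ℝ))) :=
  nscl_etf_global_min_general d N C n hC hn z y hbal μ hcollapse hnorm hangle
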